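/- Fix integers k, k' ≥ 0, a complex number θ, and an integer t ≥ 1. Define h_t(x_1,…,x_k, y_1,…,y_{k'}) := Σ_{i=1}^{k} B_t(x_i + 1/2) + (−θ)^{t−1} Σ_{j=1}^{k'} B_t(y_j + 1/2), where B_t is the Bernoulli polynomial of degree t. Then for every pair of indices (i,j) and every point (x,y) satisfying x_i + θ·y_j = 0, one has h_t(x + (1/2)e_i, y − (1/2)e_j) = h_t(x − (1/2)e_i, y + (1/2)e_j), where e_i, e_j denote standard basis vectors in the x- and y-variables respectively. -/

import Mathlib

/-!
With `Δ` the forward difference, the inner sum of `bernoulliPoly` is `(-1)^i Δ^i (w ^ t)`, so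
`B_t(z + 1) - B_t(z)` is the truncated series `L = log (1 + Δ) = ∑ (-1)^m Δ^(m+1) / (m + 1)`
applied to `w ^ t`. The Leibniz rule `Δ^(m+1) (w f) = z Δ^(m+1) f + (m + 1) Δ^m f (z + 1)` and a
telescoping sum give `L (w f) = z L f + f` up to a term `Δ^N f` that vanishes on polynomials of
degree `< N`, so `L` differentiates powers: `B_t(z + 1) - B_t(z) = t z^(t-1)`. Hence moving `x_i`
by `+1` changes `h_t` by `t x_i^(t-1)` and moving `y_j` by `-1` changes it by
`-(-θ)^(t-1) t y_j^(t-1)`, and these cancel when `x_i = -θ y_j`.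
-/

/-- The Bernoulli polynomial of degree `t`. -/
noncomputable def bernoulliPoly (t : ℕ) (z : ℂ) : ℂ :=
  ∑ i ∈ Finset.range (t + 1), (1 / ((i : ℂ) + 1)) *
    ∑ j ∈ Finset.range (i + 1), (-1) ^ j * (Nat.choose i j : ℂ) * (z + (j : ℂ)) ^ t

/-- `h_t(x,y) = ∑_i B_t(x_i + 1/2) + (-θ)^{t-1} ∑_j B_t(y_j + 1/2)`. -/
noncomputable def hPoly (k k' t : ℕ) (θ : ℂ) (x : Fin k → ℂ) (y : Fin k' → ℂ) : ℂ :=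
  (∑ i, bernoulliPoly t (x i + 1 / 2)) + (-θ) ^ (t - 1) * ∑ j, bernoulliPoly t (y j + 1 / 2)

open Finset Function fwdDiff

section CommRing

variable {R : Type*} [CommRing R]

lemma sum_neg_one_pow_mul_choose_mul_shift (f : R → R) (i : ℕ) (z : R) :
    ∑ j ∈ range (i + 1), (-1) ^ j * (i.choose j : R) * f (z + j) =
      (-1) ^ i * Δ_[1] ^[i] f z := by
  rw [fwdDiff_iter_eq_sum_shift, mul_sum]
  refine sum_congr rfl fun j hj => ?_
  obtain ⟨d, rfl⟩ := Nat.exists_eq_add_of_le (Nat.lt_succ_iff.mp (mem_range.mp hj))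
  have hsign : ((-1 : R) ^ (j + d)) * (-1) ^ d = (-1) ^ j := by
    rw [pow_add, mul_assoc, ← pow_add, ← two_mul, pow_mul]
    simp
  simp only [Nat.add_sub_cancel_left, zsmul_eq_mul, nsmul_eq_mul, mul_one]
  push_cast
  rw [← hsign]
  ring

lemma fwdDiff_iter_succ_id_mul (f : R → R) (m : ℕ) (z : R) :
    Δ_[1] ^[m + 1] (fun w => w * f w) z =
      z * Δ_[1] ^[m + 1] f z + (m + 1) * Δ_[1] ^[m] f (z + 1) := by
  induction m generalizing z with
  | zero => simp [fwdDiff]; ring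
  | succ m ih =>
    rw [iterate_succ_apply', funext ih]
    simp only [fwdDiff, iterate_succ_apply']
    push_cast
    ring

lemma sum_neg_one_pow_mul_fwdDiff_iter_add_one (f : R → R) (N : ℕ) (z : R) :
    ∑ m ∈ range N, (-1) ^ m * Δ_[1] ^[m] f (z + 1) = f z - (-1) ^ N * Δ_[1] ^[N] f z := by
  have hstep (m : ℕ) : (-1) ^ m * Δ_[1] ^[m] f (z + 1) =
      (-1) ^ m * Δ_[1] ^[m] f z - (-1) ^ (m + 1) * Δ_[1] ^[m + 1] f z := by
    rw [iterate_succ_apply', fwdDiff]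
    ring
  simp only [hstep, sum_range_sub', pow_zero, one_mul, iterate_zero, id]

end CommRing

section Field

variable {K : Type*} [Field K] [CharZero K]

noncomputable def logFwdDiff (N : ℕ) (f : K → K) (z : K) : K :=
  ∑ m ∈ range N, (-1) ^ m / (m + 1) * Δ_[1] ^[m + 1] f z

lemma logFwdDiff_id_mul (N : ℕ) (f : K → K) (z : K) :
    logFwdDiff N (fun w => w * f w) z =
      z * logFwdDiff N f z + f z - (-1) ^ N * Δ_[1] ^[N] f z := by
  have hterm (m : ℕ) : (-1) ^ m / ((m : K) + 1) * Δ_[1] ^[m + 1] (fun w => w * f w) z =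
      z * ((-1) ^ m / (m + 1) * Δ_[1] ^[m + 1] f z) + (-1) ^ m * Δ_[1] ^[m] f (z + 1) := by
    rw [fwdDiff_iter_succ_id_mul]
    field_simp
  simp only [logFwdDiff, hterm, sum_add_distrib, ← mul_sum,
    sum_neg_one_pow_mul_fwdDiff_iter_add_one]
  ring

lemma logFwdDiff_pow {N n : ℕ} (hn : n ≤ N) (z : K) :
    logFwdDiff N (fun w => w ^ n) z = n * z ^ (n - 1) := by
  induction n with
  | zero =>
    have hconst (m : ℕ) : Δ_[1] ^[m + 1] (fun w : K => w ^ 0) = 0 :=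
      fwdDiff_iter_pow_eq_zero_of_lt m.succ_pos
    simp only [logFwdDiff, hconst, Pi.zero_apply, mul_zero, sum_const_zero, CharP.cast_eq_zero,
      zero_mul]
  | succ n ih =>
    have hvanish : Δ_[1] ^[N] (fun w : K => w ^ n) z = 0 :=
      congrFun (fwdDiff_iter_pow_eq_zero_of_lt (by omega)) z
    simp only [pow_succ', logFwdDiff_id_mul, ih (by omega), hvanish, mul_zero, sub_zero]
    rcases n with _ | n
    · simp
    · push_cast [Nat.add_sub_cancel]
      ring

end Field

lemma bernoulliPoly_eq_sum_fwdDiff_iter (t : ℕ) (z : ℂ) :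
    bernoulliPoly t z =
      ∑ i ∈ range (t + 1), (-1) ^ i / (i + 1) * Δ_[1] ^[i] (fun w => w ^ t) z := by
  simp only [bernoulliPoly, sum_neg_one_pow_mul_choose_mul_shift (fun w => w ^ t)]
  refine sum_congr rfl fun i _ => ?_
  ring

lemma bernoulliPoly_add_one_sub (t : ℕ) (z : ℂ) :
    bernoulliPoly t (z + 1) - bernoulliPoly t z = t * z ^ (t - 1) := by
  have hdiff (i : ℕ) : Δ_[1] ^[i] (fun w : ℂ => w ^ t) (z + 1) - Δ_[1] ^[i] (fun w => w ^ t) z =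
      Δ_[1] ^[i + 1] (fun w => w ^ t) z := by
    rw [iterate_succ_apply', fwdDiff]
  simp only [bernoulliPoly_eq_sum_fwdDiff_iter, ← sum_sub_distrib, ← mul_sub, hdiff]
  exact logFwdDiff_pow (Nat.le_succ t) z

lemma sum_apply_update_sub_sum_apply_update {ι M : Type*} [Fintype ι] [DecidableEq ι]
    [AddCommGroup M] {α : Type*} (g : α → M) (x : ι → α) (i : ι) (a b : α) :
    ∑ l, g (update x i a l) - ∑ l, g (update x i b l) = g a - g b := by
  simp only [apply_update (fun _ => g), sum_update_of_mem (mem_univ i)]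
  abel

theorem hPoly_quasi_invariance_general (k k' : ℕ) (θ : ℂ) (t : ℕ)
    (i : Fin k) (j : Fin k') (x : Fin k → ℂ) (y : Fin k' → ℂ)
    (h : x i + θ * y j = 0) :
    hPoly k k' t θ (Function.update x i (x i + 1 / 2)) (Function.update y j (y j - 1 / 2)) =
      hPoly k k' t θ (Function.update x i (x i - 1 / 2)) (Function.update y j (y j + 1 / 2)) := by
  let B : ℂ → ℂ := fun w => bernoulliPoly t (w + 1 / 2)
  have hB (w : ℂ) : B (w + 1 / 2) - B (w - 1 / 2) = t * w ^ (t - 1) := by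
    simp only [B, sub_add_cancel, add_assoc, add_halves]
    exact bernoulliPoly_add_one_sub t w
  have hx := sum_apply_update_sub_sum_apply_update B x i (x i + 1 / 2) (x i - 1 / 2)
  have hy := sum_apply_update_sub_sum_apply_update B y j (y j + 1 / 2) (y j - 1 / 2)
  rw [hB] at hx hy
  have hxy : x i ^ (t - 1) = (-θ) ^ (t - 1) * y j ^ (t - 1) := by
    rw [← mul_pow, show x i = -θ * y j by linear_combination h]
  simp only [hPoly]
  linear_combination hx - (-θ) ^ (t - 1) * hy + t * hxy

/-- Quasi-invariance of `h_t` on the hyperplanes `x_i + θ y_j = 0`. -/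
theorem hPoly_quasi_invariance (k k' : ℕ) (θ : ℂ) (t : ℕ) (ht : 1 ≤ t)
    (i : Fin k) (j : Fin k') (x : Fin k → ℂ) (y : Fin k' → ℂ)
    (h : x i + θ * y j = 0) :
    hPoly k k' t θ (Function.update x i (x i + 1 / 2)) (Function.update y j (y j - 1 / 2)) =
      hPoly k k' t θ (Function.update x i (x i - 1 / 2)) (Function.update y j (y j + 1 / 2)) :=
  hPoly_quasi_invariance_general k k' θ t i j x y h
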